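/- arXiv:2307.05332 — 2 statements merged into one kernel-verified Lean document; each statement's English description precedes it below -/
import Mathlib

section
/- Let G = (V,E) be a d-regular graph on p vertices. Then the δ-sequence of G is symmetric: δ_G(i) + δ_G(p - i + 1) = δ_G(p) for all i with 1 ≤ i ≤ p. -/
open Finset

/-- Number of edges of `G` with both endpoints in `A`. -/
def edgesIn {V : Type*} (G : SimpleGraph V) [Fintype V] [DecidableEq V]
    [DecidableRel G.Adj] (A : Finset V) : ℕ :=
  (G.edgeFinset.filter (fun e => ∀ v ∈ e, v ∈ A)).card

/-- `maxEdges G m` is the maximum number of induced edges over all `m`-element vertex sets. -/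
def maxEdges {V : Type*} (G : SimpleGraph V) [Fintype V] [DecidableEq V]
    [DecidableRel G.Adj] (m : ℕ) : ℕ :=
  ((Finset.univ : Finset V).powersetCard m).sup (fun A => edgesIn G A)

/-- The `δ`-sequence of `G` (1-indexed, as an integer). -/
def deltaSeq {V : Type*} (G : SimpleGraph V) [Fintype V] [DecidableEq V]
    [DecidableRel G.Adj] (m : ℕ) : ℤ :=
  (maxEdges G m : ℤ) - (maxEdges G (m - 1) : ℤ)

section Aux

variable {V : Type*} (G : SimpleGraph V) [Fintype V] [DecidableEq V] [DecidableRel G.Adj]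

lemma two_mul_edgesIn (A : Finset V) :
    2 * edgesIn G A =
      ((univ : Finset (V × V)).filter fun p => G.Adj p.1 p.2 ∧ p.1 ∈ A ∧ p.2 ∈ A).card := by
  classical
  let G' : SimpleGraph V :=
    { Adj := fun u v => G.Adj u v ∧ u ∈ A ∧ v ∈ A
      symm := by constructor; intro u v h; exact ⟨h.1.symm, h.2.2, h.2.1⟩
      loopless := by constructor; intro u h; exact G.loopless.irrefl u h.1 }
  haveI : DecidableRel G'.Adj := fun u v => inferInstanceAs (Decidable (_ ∧ _ ∧ _))
  have he : edgesIn G A = G'.edgeFinset.card := by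
    unfold edgesIn
    congr 1
    ext e
    induction e with
    | _ a b =>
      simp [SimpleGraph.mem_edgeFinset, SimpleGraph.mem_edgeSet, Sym2.mem_iff, G']
  rw [he, SimpleGraph.two_mul_card_edgeFinset]
  apply congrArg
  ext ⟨u, v⟩
  simp [G']

lemma card_adj_fst_mem (A : Finset V) :
    ((univ : Finset (V × V)).filter fun p => G.Adj p.1 p.2 ∧ p.1 ∈ A).card =
      ∑ a ∈ A, G.degree a := by
  classical
  rw [Finset.card_eq_sum_card_fiberwise
    (f := Prod.fst) (t := A) (by intro p hp; exact (Finset.mem_filter.1 hp).2.2)]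
  refine Finset.sum_congr rfl fun a ha => ?_
  rw [SimpleGraph.degree, SimpleGraph.neighborFinset_eq_filter]
  have : (((univ : Finset (V × V)).filter fun p => G.Adj p.1 p.2 ∧ p.1 ∈ A).filter
      fun p => p.1 = a) = {a} ×ˢ (univ.filter (G.Adj a)) := by
    ext ⟨u, v⟩
    simp only [Finset.mem_filter, Finset.mem_univ, true_and, Finset.mem_product,
      Finset.mem_singleton]
    constructor
    · rintro ⟨⟨hadj, _⟩, rfl⟩; exact ⟨rfl, hadj⟩
    · rintro ⟨rfl, hadj⟩; exact ⟨⟨hadj, ha⟩, rfl⟩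
  rw [this, Finset.card_product, Finset.card_singleton, one_mul]

lemma card_cross_symm (A : Finset V) :
    ((univ : Finset (V × V)).filter fun p => G.Adj p.1 p.2 ∧ p.1 ∈ A ∧ p.2 ∉ A).card =
      ((univ : Finset (V × V)).filter fun p => G.Adj p.1 p.2 ∧ p.1 ∉ A ∧ p.2 ∈ A).card := by
  apply Finset.card_bij (fun p _ => p.swap)
  · rintro ⟨u, v⟩ hp
    simp only [Finset.mem_filter, Finset.mem_univ, true_and] at hp ⊢
    exact ⟨hp.1.symm, hp.2.2, hp.2.1⟩
  · rintro ⟨u, v⟩ _ ⟨u', v'⟩ _ h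
    simpa [Prod.ext_iff, and_comm] using h
  · rintro ⟨u, v⟩ hp
    refine ⟨(v, u), ?_, rfl⟩
    simp only [Finset.mem_filter, Finset.mem_univ, true_and] at hp ⊢
    exact ⟨hp.1.symm, hp.2.2, hp.2.1⟩

lemma per_set_identity {d : ℕ} (hreg : G.IsRegularOfDegree d) (A : Finset V) :
    d * A.card + 2 * edgesIn G Aᶜ = d * Aᶜ.card + 2 * edgesIn G A := by
  classical
  have hdeg : ∀ B : Finset V, d * B.card =
      ((univ : Finset (V × V)).filter fun p => G.Adj p.1 p.2 ∧ p.1 ∈ B).card := by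
    intro B
    rw [card_adj_fst_mem]
    simp only [hreg _]
    rw [Finset.sum_const, smul_eq_mul, mul_comm]
  have hsplit : ∀ B : Finset V,
      ((univ : Finset (V × V)).filter fun p => G.Adj p.1 p.2 ∧ p.1 ∈ B).card =
        ((univ : Finset (V × V)).filter fun p => G.Adj p.1 p.2 ∧ p.1 ∈ B ∧ p.2 ∈ B).card +
        ((univ : Finset (V × V)).filter fun p => G.Adj p.1 p.2 ∧ p.1 ∈ B ∧ p.2 ∉ B).card := by
    intro B
    rw [← Finset.card_filter_add_card_filter_not
      (s := (univ : Finset (V × V)).filter fun p => G.Adj p.1 p.2 ∧ p.1 ∈ B)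
      (p := fun p : V × V => p.2 ∈ B)]
    congr 1 <;>
    · rw [Finset.filter_filter]
      apply congrArg
      apply Finset.filter_congr
      intro p _
      constructor <;> tauto
  have hA := hdeg A
  have hAc := hdeg Aᶜ
  rw [hsplit A] at hA
  rw [hsplit Aᶜ] at hAc
  have hcross : ((univ : Finset (V × V)).filter fun p => G.Adj p.1 p.2 ∧ p.1 ∈ A ∧ p.2 ∉ A).card =
      ((univ : Finset (V × V)).filter fun p => G.Adj p.1 p.2 ∧ p.1 ∈ Aᶜ ∧ p.2 ∉ Aᶜ).card := by
    rw [card_cross_symm]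
    apply congrArg
    apply Finset.filter_congr
    intro p _
    simp
  rw [two_mul_edgesIn, two_mul_edgesIn, hA, hAc]
  omega

lemma edgesIn_le_maxEdges (A : Finset V) : edgesIn G A ≤ maxEdges G A.card :=
  Finset.le_sup (by simp [Finset.mem_powersetCard])

lemma maxEdges_ineq {d : ℕ} (hreg : G.IsRegularOfDegree d) {m : ℕ}
    (hm : m ≤ Fintype.card V) :
    2 * maxEdges G m + d * (Fintype.card V - m) ≤
      2 * maxEdges G (Fintype.card V - m) + d * m := by
  classical
  obtain ⟨B, hBu, hB⟩ := Finset.exists_subset_card_eq (show m ≤ (univ : Finset V).card by simpa)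
  have hne : ((univ : Finset V).powersetCard m).Nonempty :=
    ⟨B, by simp [Finset.mem_powersetCard, hBu, hB]⟩
  obtain ⟨A, hA, hsup⟩ := Finset.exists_mem_eq_sup _ hne (fun A => edgesIn G A)
  rw [Finset.mem_powersetCard] at hA
  have hcard : A.card = m := hA.2
  have hcc : Aᶜ.card = Fintype.card V - m := by
    rw [Finset.card_compl, hcard]
  have hid := per_set_identity G hreg A
  have h1 : edgesIn G Aᶜ ≤ maxEdges G (Fintype.card V - m) := by
    rw [← hcc]; exact edgesIn_le_maxEdges G Aᶜ
  rw [maxEdges, hsup]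
  rw [hcard, hcc] at hid
  omega

lemma maxEdges_symm_eq {d : ℕ} (hreg : G.IsRegularOfDegree d) {m : ℕ}
    (hm : m ≤ Fintype.card V) :
    2 * maxEdges G m + d * (Fintype.card V - m) =
      2 * maxEdges G (Fintype.card V - m) + d * m := by
  have h1 := maxEdges_ineq G hreg hm
  have h2 := maxEdges_ineq G hreg (Nat.sub_le (Fintype.card V) m)
  rw [Nat.sub_sub_self hm] at h2
  omega

lemma maxEdges_of_le_one {m : ℕ} (hm : m ≤ 1) : maxEdges G m = 0 := by
  rw [maxEdges]
  apply Nat.eq_zero_of_le_zero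
  apply Finset.sup_le
  intro A hA
  rw [Finset.mem_powersetCard] at hA
  have hA1 : A.card ≤ 1 := hA.2 ▸ hm
  rw [edgesIn, Nat.le_zero, Finset.card_eq_zero, Finset.filter_eq_empty_iff]
  intro e he
  induction e with
  | _ a b =>
    rw [SimpleGraph.mem_edgeFinset, SimpleGraph.mem_edgeSet] at he
    intro hall
    have ha := hall a (by simp)
    have hb := hall b (by simp)
    exact he.ne (Finset.card_le_one.1 hA1 a ha b hb)

end Aux

/-- the `δ`-sequence of a `d`-regular graph on `p` vertices is symmetric. -/
theorem deltaSeq_symmetric_of_regular {V : Type*} (G : SimpleGraph V) [Fintype V] [DecidableEq V]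
    [DecidableRel G.Adj] (d : ℕ) (hreg : G.IsRegularOfDegree d) :
    ∀ i : ℕ, 1 ≤ i → i ≤ Fintype.card V →
      deltaSeq G i + deltaSeq G (Fintype.card V - i + 1) = deltaSeq G (Fintype.card V) := by
  intro i hi1 hip
  set p := Fintype.card V with hp
  have hp1 : 1 ≤ p := le_trans hi1 hip
  have h0 : maxEdges G 0 = 0 := maxEdges_of_le_one G (by norm_num)
  have h1 : maxEdges G 1 = 0 := maxEdges_of_le_one G le_rfl
  have e1 := maxEdges_symm_eq G hreg hip
  have e2 := maxEdges_symm_eq G hreg (show i - 1 ≤ p by omega)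
  have e3 := maxEdges_symm_eq G hreg (le_refl p)
  have e4 := maxEdges_symm_eq G hreg (Nat.sub_le p 1)
  rw [show p - (i - 1) = p - i + 1 by omega] at e2
  rw [Nat.sub_self] at e3
  rw [show p - (p - 1) = 1 by omega] at e4
  rw [h0] at e3
  rw [h1] at e4
  rw [← hp] at e1
  zify [hip, hi1, hp1] at e1 e2 e3 e4
  simp only [deltaSeq]
  rw [show p - i + 1 - 1 = p - i by omega]
  linarith
end

section
/- Let p ≥ 2 and i a divisor of p, s ≥ 1. Then there exists a graph G on sp vertices whose δ-sequence is that of H_{s,p,i}: namely δ_G(m) (indexed from 1) consists of s runs of length p, where the j-th run (j = 0,...,s-1) is (j(p-i), j(p-i)+1, ..., j(p-i)+p-1), and G admits an optimal order (nested solutions). Concretely, G can be taken as the iterated join of p/i copies of the disjoint union of s cliques K_i. -/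
open Finset

section Aux

/-- auxiliary convexity function: `G(x) = ⌊x/i⌋ i² + (x mod i)²` -/
def gfun (i x : ℕ) : ℕ := (x / i) * i ^ 2 + (x % i) ^ 2

lemma gfun_step (i x t : ℕ) (hi : 1 ≤ i) (ht : t ≤ i) :
    gfun i x + t ^ 2 ≤ gfun i (x + t) := by
  have hu : x % i < i := Nat.mod_lt _ hi
  rcases lt_or_ge (x % i + t) i with h | h
  · have h1 : (x + t) % i = x % i + t := by
      conv_lhs => rw [← Nat.mod_add_div x i]
      rw [Nat.add_right_comm, Nat.add_mul_mod_self_left, Nat.mod_eq_of_lt h]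
    have h2 : (x + t) / i = x / i := by
      conv_lhs => rw [← Nat.mod_add_div x i]
      rw [Nat.add_right_comm, Nat.add_mul_div_left _ _ hi, Nat.div_eq_of_lt h]
      omega
    rw [gfun, gfun, h1, h2]
    nlinarith [Nat.zero_le (x % i * t)]
  · have hmod : (x % i + t) % i = x % i + t - i := by
      rw [Nat.mod_eq_sub_mod h, Nat.mod_eq_of_lt (by omega)]
    have hdiv : (x % i + t) / i = 1 := by
      apply Nat.div_eq_of_lt_le <;> omega
    have h1 : (x + t) % i = x % i + t - i := by
      conv_lhs => rw [← Nat.mod_add_div x i]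
      rw [Nat.add_right_comm, Nat.add_mul_mod_self_left, hmod]
    have h2 : (x + t) / i = x / i + 1 := by
      conv_lhs => rw [← Nat.mod_add_div x i]
      rw [Nat.add_right_comm, Nat.add_mul_div_left _ _ hi, hdiv]
      omega
    rw [gfun, gfun, h1, h2]
    zify [h]
    nlinarith [mul_nonneg (sub_nonneg.2 (show (t:ℤ) ≤ i by exact_mod_cast ht))
      (sub_nonneg.2 (show (x % i : ℤ) ≤ i by exact_mod_cast hu.le))]

lemma sum_sq_le_gfun {β : Type*} [DecidableEq β] (i : ℕ) (hi : 1 ≤ i) (B : Finset β)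
    (f : β → ℕ) (hf : ∀ b ∈ B, f b ≤ i) :
    ∑ b ∈ B, f b ^ 2 ≤ gfun i (∑ b ∈ B, f b) := by
  induction B using Finset.induction with
  | empty => simp [gfun]
  | @insert a Bs hb ih =>
    rw [Finset.sum_insert hb, Finset.sum_insert hb]
    calc f a ^ 2 + ∑ b ∈ Bs, f b ^ 2 ≤ f a ^ 2 + gfun i (∑ b ∈ Bs, f b) := by
          gcongr; exact ih fun b hbm => hf b (Finset.mem_insert_of_mem hbm)
      _ ≤ gfun i (∑ b ∈ Bs, f b + f a) := by
          rw [add_comm]; exact gfun_step i _ _ hi (hf a (Finset.mem_insert_self a Bs))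
      _ = gfun i (f a + ∑ b ∈ Bs, f b) := by rw [add_comm]

lemma gfun_tangent (i x j : ℕ) (hi : 1 ≤ i) :
    (gfun i x : ℤ) + i ^ 2 * j * (j - 1) + 2 * i * j * ((x : ℤ) - i * j) ≤ (x : ℤ) ^ 2 := by
  have hu : x % i < i := Nat.mod_lt _ hi
  have hx : (x : ℤ) = (x % i : ℕ) + i * (x / i : ℕ) := by exact_mod_cast (Nat.mod_add_div x i).symm
  have hui' : ((x % i : ℕ) : ℤ) < (i:ℤ) := by exact_mod_cast hu
  set w : ℤ := ((x / i : ℕ) : ℤ) with hw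
  set u : ℤ := ((x % i : ℕ) : ℤ) with huu
  have hg : (gfun i x : ℤ) = w * (i:ℤ) ^ 2 + u ^ 2 := by
    rw [gfun]; simp only [Nat.cast_add, Nat.cast_mul, Nat.cast_pow, hw, huu]
  rw [hg, hx]
  have hui : u < (i:ℤ) := hui'
  have hu0 : 0 ≤ u := Int.natCast_nonneg _
  have hw0 : 0 ≤ w := Int.natCast_nonneg _
  have hj0 : 0 ≤ (j:ℤ) := Int.natCast_nonneg _
  -- goal reduces to e*i*(e*i + 2u − i) ≥ 0 with e = w − j
  rcases lt_trichotomy w (j:ℤ) with h | h | h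
  · nlinarith [mul_nonneg (mul_nonneg (show (0:ℤ) ≤ i by omega) (show (0:ℤ) ≤ (j:ℤ) - w by omega)) (show (0:ℤ) ≤ (i:ℤ) - u by omega),
      mul_nonneg (show (0:ℤ) ≤ (j:ℤ) - w - 1 by omega) (show (0:ℤ) ≤ (i:ℤ)*(i:ℤ) by positivity)]
  · rw [h]; nlinarith
  · nlinarith [mul_nonneg (mul_nonneg (show (0:ℤ) ≤ i by omega) (show (0:ℤ) ≤ w - j by omega)) (show (0:ℤ) ≤ (i:ℤ)*(w - j) - i + 2*u by nlinarith),
      mul_pos (show (0:ℤ) < i by omega) (show (0:ℤ) < w - j by omega)]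

/-- the increment sequence `δ'(k) = k − i⌊k/p⌋` -/
def dlt (p i k : ℕ) : ℕ := k - i * (k / p)

/-- partial sums of the increment sequence -/
def Fseq (p i m : ℕ) : ℕ := ∑ k ∈ Finset.range m, dlt p i k

lemma two_sum_div (p : ℕ) (hp : 1 ≤ p) (m : ℕ) :
    2 * (∑ k ∈ Finset.range m, ((k / p : ℕ) : ℤ)) =
      p * (m / p : ℕ) * ((m / p : ℕ) - 1) + 2 * (m / p : ℕ) * (m % p : ℕ) := by
  induction m with
  | zero => simp
  | succ m ih =>
    rw [Finset.sum_range_succ, mul_add]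
    have hm : p * (m / p) + m % p = m := Nat.div_add_mod m p
    have hr : m % p < p := Nat.mod_lt _ hp
    have hs : m + 1 = p * (m / p) + (m % p + 1) := by omega
    rcases lt_or_ge (m % p + 1) p with h | h
    · have h1 : (m + 1) / p = m / p := by
        rw [hs, Nat.mul_add_div hp, Nat.div_eq_of_lt h, Nat.add_zero]
      have h2 : (m + 1) % p = m % p + 1 := by
        rw [hs, Nat.mul_add_mod, Nat.mod_eq_of_lt h]
      rw [h1, h2]
      simp only [Nat.cast_add, Nat.cast_one]
      linear_combination ih
    · have he : m % p + 1 = p := by omega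
      have h1 : (m + 1) / p = m / p + 1 := by
        rw [hs, he, Nat.mul_add_div hp, Nat.div_self hp]
      have h2 : (m + 1) % p = 0 := by
        rw [hs, he, Nat.mul_add_mod, Nat.mod_self]
      have hrp : ((m % p : ℕ) : ℤ) = (p : ℤ) - 1 := by
        omega
      rw [h1, h2]
      simp only [Nat.cast_add, Nat.cast_one, Nat.cast_zero]
      linear_combination ih + 2 * ((m / p : ℕ) : ℤ) * hrp

lemma dlt_cast (p i k : ℕ) (hip : i ≤ p) :
    (dlt p i k : ℤ) = (k : ℤ) - i * (k / p : ℕ) := by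
  have h2 : i * (k / p) ≤ k :=
    le_trans (Nat.mul_le_mul_right _ hip) (by rw [mul_comm]; exact Nat.div_mul_le_self k p)
  rw [dlt, Nat.cast_sub h2, Nat.cast_mul]

lemma two_sum_id (m : ℕ) : 2 * (∑ k ∈ Finset.range m, (k:ℤ)) = (m:ℤ) * m - m := by
  induction m with
  | zero => simp
  | succ n ihn =>
    rw [Finset.sum_range_succ, mul_add]
    simp only [Nat.cast_add, Nat.cast_one]
    linear_combination ihn

lemma two_Fseq (p i m : ℕ) (hp : 1 ≤ p) (hip : i ≤ p) :
    2 * (Fseq p i m : ℤ) = (m:ℤ) * m - m -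
      ((i:ℤ) * p * (m / p : ℕ) * ((m / p : ℕ) - 1) + 2 * i * (m / p : ℕ) * (m % p : ℕ)) := by
  have hcast : (Fseq p i m : ℤ) = ∑ k ∈ Finset.range m, ((k:ℤ) - i * (k / p : ℕ)) := by
    rw [Fseq, Nat.cast_sum]
    exact Finset.sum_congr rfl fun k _ => dlt_cast p i k hip
  have h1 := two_sum_id m
  rw [hcast, Finset.sum_sub_distrib]
  rw [← Finset.mul_sum]
  linear_combination h1 - (i:ℤ) * two_sum_div p hp m

variable {V : Type*} (G : SimpleGraph V) [Fintype V] [DecidableEq V] [DecidableRel G.Adj]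

lemma edgesIn_insert {v : V} {A : Finset V} (hv : v ∉ A) :
    edgesIn G (insert v A) = edgesIn G A + (A.filter (G.Adj v)).card := by
  classical
  rw [edgesIn, edgesIn]
  have hsplit : G.edgeFinset.filter (fun e => ∀ x ∈ e, x ∈ insert v A) =
      (G.edgeFinset.filter (fun e => ∀ x ∈ e, x ∈ A)) ∪
      (G.edgeFinset.filter (fun e => (∀ x ∈ e, x ∈ insert v A) ∧ v ∈ e)) := by
    ext e
    simp only [mem_filter, mem_union]
    constructor
    · rintro ⟨he, hin⟩
      by_cases hve : v ∈ e
      · exact Or.inr ⟨he, hin, hve⟩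
      · refine Or.inl ⟨he, fun x hx => ?_⟩
        rcases Finset.mem_insert.1 (hin x hx) with h | h
        · exact absurd (h ▸ hx) hve
        · exact h
    · rintro (⟨he, hin⟩ | ⟨he, hin, _⟩)
      · exact ⟨he, fun x hx => Finset.mem_insert_of_mem (hin x hx)⟩
      · exact ⟨he, hin⟩
  have hdisj : Disjoint (G.edgeFinset.filter (fun e => ∀ x ∈ e, x ∈ A))
      (G.edgeFinset.filter (fun e => (∀ x ∈ e, x ∈ insert v A) ∧ v ∈ e)) := by
    rw [Finset.disjoint_left]
    intro e h1 h2
    rw [mem_filter] at h1 h2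
    exact hv (h1.2 v h2.2.2)
  rw [hsplit, Finset.card_union_of_disjoint hdisj]
  congr 1
  refine (Finset.card_bij (fun w _ => s(v, w)) ?_ ?_ ?_).symm
  · intro w hw
    rw [mem_filter] at hw ⊢
    refine ⟨SimpleGraph.mem_edgeFinset.2 hw.2, ?_, Sym2.mem_mk_left v w⟩
    intro x hx
    rcases Sym2.mem_iff.1 hx with h | h
    · exact h ▸ Finset.mem_insert_self v A
    · exact h ▸ Finset.mem_insert_of_mem hw.1
  · intro w1 hw1 w2 hw2 he
    rw [mem_filter] at hw1 hw2
    rcases Sym2.eq_iff.1 he with ⟨_, h⟩ | ⟨h1, h2⟩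
    · exact h
    · exact (h2 ▸ h1 : w1 = w2)
  · intro e he
    rw [mem_filter] at he
    obtain ⟨he1, he2, hve⟩ := he
    induction e with
    | _ x y =>
      have hadj : G.Adj x y := SimpleGraph.mem_edgeFinset.1 he1
      rcases Sym2.mem_iff.1 hve with h | h
      · subst h
        refine ⟨y, ?_, rfl⟩
        rw [mem_filter]
        rcases Finset.mem_insert.1 (he2 y (Sym2.mem_mk_right v y)) with h' | h'
        · rw [h'] at hadj; exact absurd hadj (G.loopless.irrefl v)
        · exact ⟨h', hadj⟩
      · subst h
        refine ⟨x, ?_, Sym2.eq_swap⟩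
        rw [mem_filter]
        rcases Finset.mem_insert.1 (he2 x (Sym2.mem_mk_left x v)) with h' | h'
        · rw [h'] at hadj; exact absurd hadj (G.loopless.irrefl v)
        · exact ⟨h', hadj.symm⟩

lemma pair_count (A : Finset V) :
    ((A ×ˢ A).filter (fun z => G.Adj z.1 z.2)).card = 2 * edgesIn G A := by
  classical
  induction A using Finset.induction with
  | empty =>
    simp only [edgesIn]
    rw [show (Finset.filter (fun e => ∀ v ∈ e, v ∈ (∅ : Finset V)) G.edgeFinset) = ∅ from ?_]
    · simp
    · rw [Finset.eq_empty_iff_forall_notMem]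
      intro e he
      rw [mem_filter] at he
      induction e with
      | _ x y => exact Finset.notMem_empty x (he.2 x (Sym2.mem_mk_left x y))
  | @insert v A hv ih =>
    rw [edgesIn_insert G hv]
    have hsplit : ((insert v A ×ˢ insert v A).filter (fun z => G.Adj z.1 z.2)) =
        ((A ×ˢ A).filter (fun z => G.Adj z.1 z.2)) ∪
        ((A.filter (G.Adj v)).image (fun w => (v, w))) ∪
        ((A.filter (G.Adj v)).image (fun w => (w, v))) := by
      ext z
      obtain ⟨z1, z2⟩ := z
      simp only [mem_filter, mem_union, mem_product, mem_image, Finset.mem_insert,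
        Prod.mk.injEq]
      constructor
      · rintro ⟨⟨h1 | h1, h2 | h2⟩, hadj⟩
        · exact absurd (h1 ▸ h2 ▸ hadj) (h1 ▸ G.loopless.irrefl z1)
        · exact Or.inl (Or.inr ⟨z2, ⟨h2, h1 ▸ hadj⟩, h1.symm, rfl⟩)
        · exact Or.inr ⟨z1, ⟨h1, h2 ▸ hadj.symm⟩, rfl, h2.symm⟩
        · exact Or.inl (Or.inl ⟨⟨h1, h2⟩, hadj⟩)
      · rintro ((⟨⟨h1, h2⟩, hadj⟩ | ⟨w, ⟨hw, hadj⟩, rfl, rfl⟩) | ⟨w, ⟨hw, hadj⟩, rfl, rfl⟩)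
        · exact ⟨⟨Or.inr h1, Or.inr h2⟩, hadj⟩
        · exact ⟨⟨Or.inl rfl, Or.inr hw⟩, hadj⟩
        · exact ⟨⟨Or.inr hw, Or.inl rfl⟩, hadj.symm⟩
    rw [hsplit]
    have hinj1 : ((A.filter (G.Adj v)).image (fun w => (v, w))).card
        = (A.filter (G.Adj v)).card :=
      Finset.card_image_of_injective _ (fun a b h => (Prod.mk.injEq _ _ _ _ ▸ h).2)
    have hinj2 : ((A.filter (G.Adj v)).image (fun w => (w, v))).card
        = (A.filter (G.Adj v)).card :=
      Finset.card_image_of_injective _ (fun a b h => (Prod.mk.injEq _ _ _ _ ▸ h).1)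
    have hd1 : Disjoint ((A ×ˢ A).filter (fun z => G.Adj z.1 z.2))
        ((A.filter (G.Adj v)).image (fun w => (v, w))) := by
      rw [Finset.disjoint_left]
      rintro z hz1 hz2
      rw [mem_filter, mem_product] at hz1
      rcases Finset.mem_image.1 hz2 with ⟨w, _, rfl⟩
      exact hv hz1.1.1
    have hd2 : Disjoint (((A ×ˢ A).filter (fun z => G.Adj z.1 z.2)) ∪
        ((A.filter (G.Adj v)).image (fun w => (v, w))))
        ((A.filter (G.Adj v)).image (fun w => (w, v))) := by
      rw [Finset.disjoint_left]
      rintro z hz1 hz2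
      rcases Finset.mem_image.1 hz2 with ⟨w, hw, rfl⟩
      rcases Finset.mem_union.1 hz1 with h | h
      · rw [mem_filter, mem_product] at h
        exact hv h.1.2
      · rcases Finset.mem_image.1 h with ⟨w', hw', hww⟩
        rw [Prod.mk.injEq] at hww
        exact hv (hww.1 ▸ (Finset.mem_filter.1 hw).1)
    rw [Finset.card_union_of_disjoint hd2, Finset.card_union_of_disjoint hd1, ih,
      hinj1, hinj2]
    ring

end Aux

section HGraph

variable (s p i : ℕ)

/-- component of a vertex -/
def compOf (k : ℕ) : ℕ := (k % p) / i
/-- class (clique) of a vertex -/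
def clsOf (k : ℕ) : ℕ := k / p

/-- the graph: iterated join of `p/i` copies of `s·K_i` -/
def HG : SimpleGraph (Fin (s * p)) where
  Adj v w := v ≠ w ∧ (compOf p i (v : ℕ) = compOf p i (w : ℕ) → clsOf p (v : ℕ) = clsOf p (w : ℕ))
  symm := by
    constructor
    rintro v w ⟨h1, h2⟩
    exact ⟨h1.symm, fun h => (h2 h.symm).symm⟩
  loopless := ⟨fun v h => h.1 rfl⟩

instance : DecidableRel (HG s p i).Adj :=
  fun v w => inferInstanceAs (Decidable (_ ∧ _))

variable {s p i}
variable (hp : 2 ≤ p) (hs : 1 ≤ s) (hi1 : 1 ≤ i) (hdvd : i ∣ p)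

include hi1 hdvd in
lemma decomp (k : ℕ) : k = p * clsOf p k + i * compOf p i k + k % i := by
  have h1 : k % p % i = k % i := Nat.mod_mod_of_dvd k hdvd
  have h2 : i * ((k % p) / i) + k % p % i = k % p := by
    rw [Nat.mul_comm]; exact Nat.div_add_mod' _ _
  have h3 : p * (k / p) + k % p = k := Nat.div_add_mod k p
  rw [clsOf, compOf]
  omega

include hp in
lemma clsOf_lt {k : ℕ} (hk : k < s * p) : clsOf p k < s :=
  Nat.div_lt_iff_lt_mul (by omega) |>.2 (by rw [Nat.mul_comm] at hk ⊢; exact hk)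

include hp hi1 hdvd in
lemma compOf_lt (k : ℕ) : compOf p i k < p / i := by
  have : k % p < p := Nat.mod_lt _ (by omega)
  exact Nat.div_lt_iff_lt_mul hi1 |>.2 (by rw [Nat.div_mul_cancel hdvd]; exact this)

end HGraph

section Main
variable {s p i : ℕ}

lemma HG_adj {v w : Fin (s * p)} : (HG s p i).Adj v w ↔
    v ≠ w ∧ (compOf p i (v : ℕ) = compOf p i (w : ℕ) → clsOf p (v : ℕ) = clsOf p (w : ℕ)) :=
  Iff.rfl


def Afib (s p i : ℕ) (A : Finset (Fin (s * p))) (a : ℕ) : Finset (Fin (s * p)) :=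
  A.filter (fun v => compOf p i (v : ℕ) = a)

def Afib2 (s p i : ℕ) (A : Finset (Fin (s * p))) (a b : ℕ) : Finset (Fin (s * p)) :=
  A.filter (fun v => compOf p i (v : ℕ) = a ∧ clsOf p (v : ℕ) = b)

@[simp] lemma mem_Afib {s p i : ℕ} {A : Finset (Fin (s * p))} {a : ℕ} {v : Fin (s * p)} :
    v ∈ Afib s p i A a ↔ v ∈ A ∧ compOf p i (v : ℕ) = a := by
  simp [Afib]

@[simp] lemma mem_Afib2 {s p i : ℕ} {A : Finset (Fin (s * p))} {a b : ℕ} {v : Fin (s * p)} :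
    v ∈ Afib2 s p i A a b ↔ v ∈ A ∧ compOf p i (v : ℕ) = a ∧ clsOf p (v : ℕ) = b := by
  simp [Afib2]

lemma edgesIn_le (hp : 2 ≤ p) (hi1 : 1 ≤ i) (hdvd : i ∣ p) (A : Finset (Fin (s * p))) :
    edgesIn (HG s p i) A ≤ Fseq p i A.card := by
  classical
  set q := p / i with hq
  have hqi : q * i = p := Nat.div_mul_cancel hdvd
  set m := A.card with hm
  set j := m / p with hj
  set r := m % p with hr
  -- the diagonal
  have hdiag : ((A ×ˢ A).filter (fun z => z.1 = z.2)).card = m := by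
    rw [hm]
    refine (Finset.card_bij (fun v _ => (v, v)) ?_ ?_ ?_).symm
    · intro v hv; simp [Finset.mem_filter, Finset.mem_product, hv]
    · intro v _ w _ h; exact (Prod.mk.injEq _ _ _ _ ▸ h).1
    · rintro ⟨z1, z2⟩ hz
      simp only [Finset.mem_filter, Finset.mem_product] at hz
      exact ⟨z1, hz.1.1, Prod.ext rfl hz.2⟩
  -- split off-diagonal into adjacent and non-adjacent pairs
  have hne : ∀ a b : Fin (s * p), clsOf p (a:ℕ) ≠ clsOf p (b:ℕ) → a ≠ b :=
    fun a b h hab => h (by rw [hab])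
  have hsplit : (A ×ˢ A).filter (fun z => ¬ z.1 = z.2) =
      ((A ×ˢ A).filter (fun z => (HG s p i).Adj z.1 z.2)) ∪
      ((A ×ˢ A).filter (fun z => compOf p i (z.1 : ℕ) = compOf p i (z.2 : ℕ) ∧
        ¬ clsOf p (z.1 : ℕ) = clsOf p (z.2 : ℕ))) := by
    ext z
    simp only [Finset.mem_filter, Finset.mem_union, HG_adj]
    constructor
    · rintro ⟨hzA, hzne⟩
      by_cases hc : compOf p i (z.1 : ℕ) = compOf p i (z.2 : ℕ) →
          clsOf p (z.1 : ℕ) = clsOf p (z.2 : ℕ)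
      · exact Or.inl ⟨hzA, hzne, hc⟩
      · push_neg at hc
        exact Or.inr ⟨hzA, hc⟩
    · rintro (⟨hzA, hzne, _⟩ | ⟨hzA, hc1, hc2⟩)
      · exact ⟨hzA, hzne⟩
      · exact ⟨hzA, hne _ _ hc2⟩
  have hdisj : Disjoint ((A ×ˢ A).filter (fun z => (HG s p i).Adj z.1 z.2))
      ((A ×ˢ A).filter (fun z => compOf p i (z.1 : ℕ) = compOf p i (z.2 : ℕ) ∧
        ¬ clsOf p (z.1 : ℕ) = clsOf p (z.2 : ℕ))) := by
    rw [Finset.disjoint_left]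
    intro z h1 h2
    rw [Finset.mem_filter] at h1 h2
    exact h2.2.2 (h1.2.2 h2.2.1)
  set N := ((A ×ˢ A).filter (fun z => compOf p i (z.1 : ℕ) = compOf p i (z.2 : ℕ) ∧
        ¬ clsOf p (z.1 : ℕ) = clsOf p (z.2 : ℕ))).card with hN
  have key1 : m * m = m + (2 * edgesIn (HG s p i) A + N) := by
    have e1 := Finset.card_filter_add_card_filter_not
      (s := A ×ˢ A) (p := fun z => z.1 = z.2)
    rw [Finset.card_product, ← hm, hdiag, hsplit,
      Finset.card_union_of_disjoint hdisj, pair_count] at e1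
    omega
  -- fiberwise decomposition
  have hsum_m : ∑ a ∈ Finset.range q, (Afib s p i A a).card = m := by
    rw [hm]
    exact (Finset.card_eq_sum_card_fiberwise
      (f := fun v : Fin (s * p) => compOf p i (v : ℕ)) (t := Finset.range q)
      (fun v _ => Finset.mem_range.2 (compOf_lt hp hi1 hdvd _))).symm
  have hsum_ma : ∀ a, (Afib s p i A a).card = ∑ b ∈ Finset.range s, (Afib2 s p i A a b).card := by
    intro a
    rw [Finset.card_eq_sum_card_fiberwise
      (f := fun v : Fin (s * p) => clsOf p (v : ℕ)) (t := Finset.range s)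
      (fun v _ => Finset.mem_range.2 (clsOf_lt hp v.2))]
    refine Finset.sum_congr rfl fun b _ => ?_
    rw [Afib, Afib2, Finset.filter_filter]
  have ht_le : ∀ a b, (Afib2 s p i A a b).card ≤ i := by
    intro a b
    refine le_trans (Finset.card_le_card_of_injOn (fun v => (v : ℕ) % i)
      (fun v _ => Finset.mem_range.2 (Nat.mod_lt _ hi1)) ?_)
      (le_of_eq (Finset.card_range i))
    intro v1 hv1 v2 hv2 hmod
    simp only [Finset.mem_coe, mem_Afib2] at hv1 hv2
    have d1 := decomp hi1 hdvd (v1 : ℕ)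
    have d2 := decomp hi1 hdvd (v2 : ℕ)
    rw [hv1.2.1, hv1.2.2] at d1
    rw [hv2.2.1, hv2.2.2] at d2
    have hmod' : (v1 : ℕ) % i = (v2 : ℕ) % i := hmod
    exact Fin.ext (by rw [d1, d2, hmod'])
  have hC2 : ((A ×ˢ A).filter
      (fun z => compOf p i (z.1 : ℕ) = compOf p i (z.2 : ℕ))).card
      = ∑ a ∈ Finset.range q, (Afib s p i A a).card ^ 2 := by
    rw [Finset.card_eq_sum_card_fiberwise
      (f := fun z : Fin (s * p) × Fin (s * p) => compOf p i (z.1 : ℕ))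
      (t := Finset.range q)
      (fun z _ => Finset.mem_range.2 (compOf_lt hp hi1 hdvd _))]
    refine Finset.sum_congr rfl fun a _ => ?_
    have hfib : ((A ×ˢ A).filter
        (fun z => compOf p i (z.1 : ℕ) = compOf p i (z.2 : ℕ))).filter
        (fun z => compOf p i (z.1 : ℕ) = a) = Afib s p i A a ×ˢ Afib s p i A a := by
      ext z
      simp only [Finset.mem_filter, Finset.mem_product, mem_Afib]
      constructor
      · rintro ⟨⟨⟨h1, h2⟩, h3⟩, h4⟩
        exact ⟨⟨h1, h4⟩, h2, h3 ▸ h4⟩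
      · rintro ⟨⟨h1, h2⟩, h3, h4⟩
        exact ⟨⟨⟨h1, h3⟩, h2.trans h4.symm⟩, h2⟩
    rw [hfib, Finset.card_product, sq]
  have hC3 : ((A ×ˢ A).filter
      (fun z => compOf p i (z.1 : ℕ) = compOf p i (z.2 : ℕ) ∧
        clsOf p (z.1 : ℕ) = clsOf p (z.2 : ℕ))).card
      = ∑ a ∈ Finset.range q, ∑ b ∈ Finset.range s, (Afib2 s p i A a b).card ^ 2 := by
    rw [Finset.card_eq_sum_card_fiberwise
      (f := fun z : Fin (s * p) × Fin (s * p) => (compOf p i (z.1 : ℕ), clsOf p (z.1 : ℕ)))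
      (t := Finset.range q ×ˢ Finset.range s)
      (fun z _ => Finset.mem_product.2 ⟨Finset.mem_range.2 (compOf_lt hp hi1 hdvd _),
        Finset.mem_range.2 (clsOf_lt hp z.1.2)⟩)]
    rw [Finset.sum_product]
    refine Finset.sum_congr rfl fun a _ => Finset.sum_congr rfl fun b _ => ?_
    have hfib : ((A ×ˢ A).filter
        (fun z => compOf p i (z.1 : ℕ) = compOf p i (z.2 : ℕ) ∧
          clsOf p (z.1 : ℕ) = clsOf p (z.2 : ℕ))).filter
        (fun z => (compOf p i (z.1 : ℕ), clsOf p (z.1 : ℕ)) = (a, b))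
        = Afib2 s p i A a b ×ˢ Afib2 s p i A a b := by
      ext z
      simp only [Finset.mem_filter, Finset.mem_product, mem_Afib2, Prod.mk.injEq]
      constructor
      · rintro ⟨⟨⟨h1, h2⟩, h3, h4⟩, h5, h6⟩
        exact ⟨⟨h1, h5, h6⟩, h2, h3 ▸ h5, h4 ▸ h6⟩
      · rintro ⟨⟨h1, h2, h3⟩, h4, h5, h6⟩
        exact ⟨⟨⟨h1, h4⟩, h2.trans h5.symm, h3.trans h6.symm⟩, h2, h3⟩
    rw [hfib, Finset.card_product, sq]
  have hNC : ∑ a ∈ Finset.range q, (Afib s p i A a).card ^ 2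
      = (∑ a ∈ Finset.range q, ∑ b ∈ Finset.range s, (Afib2 s p i A a b).card ^ 2) + N := by
    have e2 := Finset.card_filter_add_card_filter_not
      (s := (A ×ˢ A).filter
        (fun z => compOf p i (z.1 : ℕ) = compOf p i (z.2 : ℕ)))
      (p := fun z => clsOf p (z.1 : ℕ) = clsOf p (z.2 : ℕ))
    rw [Finset.filter_filter, Finset.filter_filter] at e2
    rw [← hC2, ← e2, hC3.symm]
  -- integer estimates
  have hqiz : (q : ℤ) * i = p := by exact_mod_cast hqi
  have hip : i ≤ p := Nat.le_of_dvd (by omega) hdvd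
  have hmr : (m : ℤ) = p * j + r := by
    exact_mod_cast (Nat.div_add_mod m p).symm
  have hstep2 : ∀ a ∈ Finset.range q,
      ((i:ℤ)^2 * j * ((j:ℤ) - 1) + 2 * i * j * (((Afib s p i A a).card : ℤ) - i * j))
        ≤ ((Afib s p i A a).card : ℤ)^2 - (gfun i (Afib s p i A a).card : ℤ) := by
    intro a _
    have := gfun_tangent i ((Afib s p i A a).card) j hi1
    linarith
  have hstep3 : ∀ a ∈ Finset.range q,
      (∑ b ∈ Finset.range s, ((Afib2 s p i A a b).card : ℤ)^2) ≤ (gfun i (Afib s p i A a).card : ℤ) := by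
    intro a _
    have hnat : (∑ b ∈ Finset.range s, (Afib2 s p i A a b).card ^ 2) ≤ gfun i (Afib s p i A a).card := by
      rw [hsum_ma a]
      exact sum_sq_le_gfun i hi1 _ _ (fun b _ => ht_le a b)
    exact_mod_cast hnat
  have hNcast : (N : ℤ) = (∑ a ∈ Finset.range q, ((Afib s p i A a).card : ℤ) ^ 2)
      - ∑ a ∈ Finset.range q, ∑ b ∈ Finset.range s, ((Afib2 s p i A a b).card : ℤ) ^ 2 := by
    have := hNC
    have hc : ((∑ a ∈ Finset.range q, (Afib s p i A a).card ^ 2 : ℕ) : ℤ)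
        = ((∑ a ∈ Finset.range q, ∑ b ∈ Finset.range s, (Afib2 s p i A a b).card ^ 2 : ℕ) : ℤ) + N := by
      exact_mod_cast congrArg (Nat.cast : ℕ → ℤ) this
    push_cast at hc
    linarith
  have hmaz : ∑ a ∈ Finset.range q, ((Afib s p i A a).card : ℤ) = m := by
    rw [← Nat.cast_sum, hsum_m]
  have main : (i:ℤ) * p * j * ((j:ℤ) - 1) + 2 * i * j * r ≤ (N : ℤ) := by
    have hb1 : ∑ a ∈ Finset.range q,
        ((i:ℤ)^2 * j * ((j:ℤ) - 1) + 2 * i * j * (((Afib s p i A a).card : ℤ) - i * j))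
        ≤ ∑ a ∈ Finset.range q, (((Afib s p i A a).card : ℤ)^2 - (gfun i (Afib s p i A a).card : ℤ)) :=
      Finset.sum_le_sum hstep2
    have hb2 : ∑ a ∈ Finset.range q, (((Afib s p i A a).card : ℤ)^2 - (gfun i (Afib s p i A a).card : ℤ))
        ≤ (N : ℤ) := by
      rw [hNcast]
      rw [Finset.sum_sub_distrib]
      have := Finset.sum_le_sum hstep3
      linarith
    have hb0 : ∑ a ∈ Finset.range q,
        ((i:ℤ)^2 * j * ((j:ℤ) - 1) + 2 * i * j * (((Afib s p i A a).card : ℤ) - i * j))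
        = (i:ℤ) * p * j * ((j:ℤ) - 1) + 2 * i * j * r := by
      rw [Finset.sum_add_distrib, Finset.sum_const, Finset.card_range, nsmul_eq_mul]
      rw [← Finset.mul_sum, Finset.sum_sub_distrib, Finset.sum_const, Finset.card_range,
        nsmul_eq_mul, hmaz]
      rw [mul_sub]
      linear_combination ((i:ℤ) * j * ((j:ℤ) - 1) - 2 * (i:ℤ) * j * j) * hqiz
        + (2 * (i:ℤ) * j) * hmr
    linarith
  -- conclude
  have htf := two_Fseq p i m (by omega) hip
  have hkey1z : (m:ℤ) * m = m + (2 * (edgesIn (HG s p i) A : ℤ) + N) := by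
    exact_mod_cast congrArg (Nat.cast : ℕ → ℤ) key1
  have hfin : 2 * (edgesIn (HG s p i) A : ℤ) ≤ 2 * (Fseq p i m : ℤ) := by
    rw [htf]; linarith
  omega

end Main

section Assemble
variable {s p i : ℕ}

def Iseg (s p m : ℕ) : Finset (Fin (s * p)) :=
  Finset.univ.filter (fun k : Fin (s * p) => (k : ℕ) < m)

lemma Iseg_card (m : ℕ) (hm : m ≤ s * p) : (Iseg s p m).card = m := by
  have h := Finset.card_bij (t := Finset.range m)
    (fun (k : Fin (s * p)) (_ : k ∈ Iseg s p m) => (k : ℕ))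
    (by intro k hk
        simp only [Iseg, Finset.mem_filter] at hk
        exact Finset.mem_range.2 hk.2)
    (by intro k1 _ k2 _ h; exact Fin.ext h)
    (by intro x hx
        refine ⟨⟨x, lt_of_lt_of_le (Finset.mem_range.1 hx) hm⟩, ?_, rfl⟩
        simp [Iseg, Finset.mem_range.1 hx])
  rw [h, Finset.card_range]

lemma Iseg_succ (m : ℕ) (hm : m < s * p) :
    Iseg s p (m + 1) = insert (⟨m, hm⟩ : Fin (s * p)) (Iseg s p m) := by
  ext k
  simp only [Iseg, Finset.mem_filter, Finset.mem_insert, Finset.mem_univ, true_and,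
    Fin.ext_iff]
  omega

lemma deg_into (hp : 2 ≤ p) (hi1 : 1 ≤ i) (hdvd : i ∣ p) (m : ℕ) (hm : m < s * p) :
    ((Iseg s p m).filter ((HG s p i).Adj ⟨m, hm⟩)).card = dlt p i m := by
  classical
  set v : Fin (s * p) := ⟨m, hm⟩ with hv
  have hip : i ≤ p := Nat.le_of_dvd (by omega) hdvd
  have hvval : (v : ℕ) = m := rfl
  have hchar : ∀ k : Fin (s * p), (k : ℕ) < m →
      (¬ (HG s p i).Adj v k ↔
        (compOf p i (k : ℕ) = compOf p i m ∧ clsOf p (k : ℕ) < m / p)) := by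
    intro k hk
    have hkv : v ≠ k := by
      intro h
      rw [show (k : ℕ) = m from by rw [← h]] at hk
      omega
    constructor
    · intro hna
      have h2 : ¬(compOf p i (v : ℕ) = compOf p i (k : ℕ) →
          clsOf p (v : ℕ) = clsOf p (k : ℕ)) := fun hc => hna ⟨hkv, hc⟩
      push_neg at h2
      have hle : clsOf p (k : ℕ) ≤ m / p := Nat.div_le_div_right (le_of_lt hk)
      refine ⟨(hvval ▸ h2.1).symm, lt_of_le_of_ne hle fun he => ?_⟩
      exact (hvval ▸ h2.2) (by rw [he]; rfl)
    · rintro ⟨hc, hlt⟩ hadj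
      have := hadj.2 (by rw [hvval]; exact hc.symm)
      rw [hvval] at this
      have : clsOf p (k : ℕ) = m / p := this.symm
      omega
  -- the set of non-neighbours
  have hfilt : (Iseg s p m).filter (fun k => ¬ (HG s p i).Adj v k) =
      Finset.univ.filter (fun k : Fin (s * p) => (k : ℕ) < m ∧
        compOf p i (k : ℕ) = compOf p i m ∧ clsOf p (k : ℕ) < m / p) := by
    ext k
    simp only [Iseg, Finset.mem_filter, Finset.mem_univ, true_and]
    constructor
    · rintro ⟨hk, hna⟩
      exact ⟨hk, (hchar k hk).1 hna⟩
    · rintro ⟨hk, hrest⟩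
      exact ⟨hk, (hchar k hk).2 hrest⟩
  have hcount : (Finset.univ.filter (fun k : Fin (s * p) => (k : ℕ) < m ∧
        compOf p i (k : ℕ) = compOf p i m ∧ clsOf p (k : ℕ) < m / p)).card
      = (m / p) * i := by
    have hcb := Finset.card_bij
      (t := Finset.univ.filter (fun k : Fin (s * p) => (k : ℕ) < m ∧
        compOf p i (k : ℕ) = compOf p i m ∧ clsOf p (k : ℕ) < m / p))
      (fun (bc : ℕ × ℕ) (hbc : bc ∈ Finset.range (m / p) ×ˢ Finset.range i) =>
        (⟨p * bc.1 + i * compOf p i m + bc.2, ?_⟩ : Fin (s * p))) ?_ ?_ ?_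
    · rw [← hcb, Finset.card_product, Finset.card_range, Finset.card_range]
    · -- the value is `< s * p`
      rcases Finset.mem_product.1 hbc with ⟨hb, hc⟩
      rw [Finset.mem_range] at hb hc
      have ha : compOf p i m < p / i := compOf_lt hp hi1 hdvd m
      have h1 : i * (compOf p i m + 1) ≤ i * (p / i) := Nat.mul_le_mul_left i ha
      rw [Nat.mul_div_cancel' hdvd] at h1
      have h2 : p * (bc.1 + 1) ≤ p * (m / p) := Nat.mul_le_mul_left p hb
      have h3 : p * (m / p) ≤ m := Nat.mul_div_le m p
      have h4 : i * (compOf p i m + 1) = i * compOf p i m + i := by ring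
      have h5 : p * (bc.1 + 1) = p * bc.1 + p := by ring
      have : p * bc.1 + i * compOf p i m + bc.2 < m := by linarith
      omega
    · -- maps into the filter
      intro bc hbc
      rcases Finset.mem_product.1 hbc with ⟨hb, hc⟩
      rw [Finset.mem_range] at hb hc
      have ha : compOf p i m < p / i := compOf_lt hp hi1 hdvd m
      have h1 : i * (compOf p i m + 1) ≤ i * (p / i) := Nat.mul_le_mul_left i ha
      rw [Nat.mul_div_cancel' hdvd] at h1
      have h4 : i * (compOf p i m + 1) = i * compOf p i m + i := by ring
      have hwp : i * compOf p i m + bc.2 < p := by omega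
      have h2 : p * (bc.1 + 1) ≤ p * (m / p) := Nat.mul_le_mul_left p hb
      have h3 : p * (m / p) ≤ m := Nat.mul_div_le m p
      have h5 : p * (bc.1 + 1) = p * bc.1 + p := by ring
      have hlt : p * bc.1 + i * compOf p i m + bc.2 < m := by linarith
      rw [Finset.mem_filter]
      refine ⟨Finset.mem_univ _, hlt, ?_, ?_⟩
      · show (((p * bc.1 + i * compOf p i m + bc.2) % p) / i) = compOf p i m
        rw [Nat.add_assoc, Nat.mul_add_mod, Nat.mod_eq_of_lt hwp,
          Nat.mul_add_div hi1, Nat.div_eq_of_lt hc, Nat.add_zero]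
      · show ((p * bc.1 + i * compOf p i m + bc.2) / p) < m / p
        rw [Nat.add_assoc, Nat.mul_add_div (by omega : 0 < p), Nat.div_eq_of_lt hwp,
          Nat.add_zero]
        exact hb
    · -- injective
      intro bc1 hbc1 bc2 hbc2 heq
      rcases Finset.mem_product.1 hbc1 with ⟨hb1, hc1⟩
      rcases Finset.mem_product.1 hbc2 with ⟨hb2, hc2⟩
      rw [Finset.mem_range] at hb1 hc1 hb2 hc2
      have hval : p * bc1.1 + i * compOf p i m + bc1.2
          = p * bc2.1 + i * compOf p i m + bc2.2 := congrArg Fin.val heq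
      have ha : compOf p i m < p / i := compOf_lt hp hi1 hdvd m
      have h1 : i * (compOf p i m + 1) ≤ i * (p / i) := Nat.mul_le_mul_left i ha
      rw [Nat.mul_div_cancel' hdvd] at h1
      have h4 : i * (compOf p i m + 1) = i * compOf p i m + i := by ring
      have hwp1 : i * compOf p i m + bc1.2 < p := by omega
      have hwp2 : i * compOf p i m + bc2.2 < p := by omega
      rw [Nat.add_assoc, Nat.add_assoc] at hval
      have hdiv : bc1.1 = bc2.1 := by
        have e1 : (p * bc1.1 + (i * compOf p i m + bc1.2)) / p = bc1.1 := by
          rw [Nat.mul_add_div (by omega : 0 < p), Nat.div_eq_of_lt hwp1, Nat.add_zero]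
        have e2 : (p * bc2.1 + (i * compOf p i m + bc2.2)) / p = bc2.1 := by
          rw [Nat.mul_add_div (by omega : 0 < p), Nat.div_eq_of_lt hwp2, Nat.add_zero]
        rw [← e1, ← e2, hval]
      rw [hdiv] at hval
      have hc' : bc1.2 = bc2.2 := Nat.add_left_cancel (Nat.add_left_cancel hval)
      exact Prod.ext hdiv hc'
    · -- surjective
      intro k hk
      rw [Finset.mem_filter] at hk
      obtain ⟨_, hklt, hkc, hkcls⟩ := hk
      refine ⟨(clsOf p (k : ℕ), (k : ℕ) % i), ?_, ?_⟩
      · exact Finset.mem_product.2 ⟨Finset.mem_range.2 hkcls,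
          Finset.mem_range.2 (Nat.mod_lt _ hi1)⟩
      · apply Fin.ext
        show p * clsOf p (k : ℕ) + i * compOf p i m + (k : ℕ) % i = (k : ℕ)
        rw [← hkc]
        exact (decomp hi1 hdvd (k : ℕ)).symm
  -- put things together
  have hsplit := Finset.card_filter_add_card_filter_not
    (s := Iseg s p m) (p := fun k => (HG s p i).Adj v k)
  rw [Iseg_card m (le_of_lt hm), hfilt, hcount] at hsplit
  rw [dlt]
  rw [show (m / p) * i = i * (m / p) from Nat.mul_comm _ _] at hsplit
  exact Nat.eq_sub_of_add_eq hsplit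

lemma edgesIn_Iseg (hp : 2 ≤ p) (hi1 : 1 ≤ i) (hdvd : i ∣ p) :
    ∀ m, m ≤ s * p → edgesIn (HG s p i) (Iseg s p m) = Fseq p i m := by
  intro m
  induction m with
  | zero =>
    intro _
    have h := edgesIn_le hp hi1 hdvd (Iseg s p 0)
    rw [Iseg_card 0 (Nat.zero_le _)] at h
    simpa [Fseq] using h
  | succ m ih =>
    intro hm1
    have hm : m < s * p := hm1
    rw [Iseg_succ m hm, edgesIn_insert _ (by simp [Iseg]), ih (le_of_lt hm),
      deg_into hp hi1 hdvd m hm]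
    simp [Fseq, Finset.sum_range_succ]

lemma maxEdges_eq (hp : 2 ≤ p) (hi1 : 1 ≤ i) (hdvd : i ∣ p) (m : ℕ) (hm : m ≤ s * p) :
    maxEdges (HG s p i) m = Fseq p i m := by
  apply le_antisymm
  · apply Finset.sup_le
    intro A hA
    rw [Finset.mem_powersetCard] at hA
    have := edgesIn_le hp hi1 hdvd A
    rwa [hA.2] at this
  · have hmem : Iseg s p m ∈ (Finset.univ : Finset (Fin (s * p))).powersetCard m :=
      Finset.mem_powersetCard.2 ⟨Finset.subset_univ _, Iseg_card m hm⟩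
    have := Finset.le_sup (f := fun A => edgesIn (HG s p i) A) hmem
    simpa [maxEdges, edgesIn_Iseg hp hi1 hdvd m hm] using this

lemma dlt_formula (hp : 2 ≤ p) (hip : i ≤ p) (k : ℕ) :
    dlt p i k = (k / p) * (p - i) + k % p := by
  have key : ∀ j r : ℕ, (p * j + r) - i * j = j * (p - i) + r := by
    intro j r
    have hpj : p * j = (p - i) * j + i * j := by
      rw [← Nat.add_mul, Nat.sub_add_cancel hip]
    rw [hpj, Nat.add_right_comm, Nat.add_sub_cancel, Nat.mul_comm]
  rw [dlt]
  nth_rewrite 1 [show k = p * (k / p) + k % p from (Nat.div_add_mod k p).symm]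
  exact key (k / p) (k % p)
end Assemble
/-- if `i` divides `p`, there is a graph on `sp` vertices whose `δ`-sequence
is that of `H_{s,p,i}` (the `j`-th run being `j(p-i), j(p-i)+1, …, j(p-i)+p-1`) and which
admits an optimal (nested) order. -/
theorem exists_H_spi (s p i : ℕ) (hp : 2 ≤ p) (hs : 1 ≤ s) (hi1 : 1 ≤ i) (hdvd : i ∣ p) :
    ∃ (G : SimpleGraph (Fin (s * p))) (_ : DecidableRel G.Adj),
      (∀ m : ℕ, 1 ≤ m → m ≤ s * p →
        deltaSeq G m = (((m - 1) / p) * (p - i) + (m - 1) % p : ℕ)) ∧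
      ∃ ord : Fin (s * p) ≃ Fin (s * p),
        ∀ m : ℕ, m ≤ s * p →
          edgesIn G ((Finset.univ.filter (fun j : Fin (s * p) => (j : ℕ) < m)).image ord)
            = maxEdges G m := by
  refine ⟨HG s p i, inferInstance, ?_, Equiv.refl _, ?_⟩
  · intro m hm1 hm2
    obtain ⟨k, rfl⟩ : ∃ k, m = k + 1 := ⟨m - 1, by omega⟩
    have hk : k ≤ s * p := by omega
    have hip : i ≤ p := Nat.le_of_dvd (by omega) hdvd
    simp only [deltaSeq, Nat.add_sub_cancel]
    rw [maxEdges_eq hp hi1 hdvd (k + 1) hm2, maxEdges_eq hp hi1 hdvd k hk,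
      ← dlt_formula hp hip k]
    have hstep : Fseq p i (k + 1) = Fseq p i k + dlt p i k := by
      simp [Fseq, Finset.sum_range_succ]
    rw [hstep]
    push_cast
    ring
  · intro m hm
    have himg : (Finset.univ.filter (fun j : Fin (s * p) => (j : ℕ) < m)).image
        (Equiv.refl (Fin (s * p))) = Iseg s p m := by
      simp [Iseg]
    rw [himg, edgesIn_Iseg hp hi1 hdvd m hm, maxEdges_eq hp hi1 hdvd m hm]
end
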